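/- arXiv:1605.07592 — 4 statements merged into one kernel-verified Lean document; each statement's English description precedes it below -/
import Mathlib

section
/- The subspace g₊ of formal Laurent series in p (coefficients smooth in x, z) containing only nonnegative powers of p, and the subspace g₋ containing only strictly negative powers of p, are both Lie subalgebras with respect to the contact bracket, i.e., {g₊, g₊}_C ⊆ g₊ and {g₋, g₋}_C ⊆ g₋. -/
/-- Partial derivative in `x` of a coefficient function of `(x, z)`. -/
noncomputable def cdX (w : ℝ → ℝ → ℝ) : ℝ → ℝ → ℝ :=
  fun x z => deriv (fun q => w q z) x

/-- Partial derivative in `z` of a coefficient function of `(x, z)`. -/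
noncomputable def cdZ (w : ℝ → ℝ → ℝ) : ℝ → ℝ → ℝ :=
  fun x z => deriv (fun q => w x q) z

/-- Coefficient at `p^k` of the contact bracket `{f, g}_C` of the formal Laurent
series `f = Σᵢ u i · pⁱ` and `g = Σⱼ v j · pʲ` whose coefficients are functions
of `(x, z)`:
`{f,g}_C = f_p g_x − p f_p g_z + f g_z − (g_p f_x − p g_p f_z + g f_z)`. -/
noncomputable def cbCoeff (u v : ℤ → ℝ → ℝ → ℝ) (k : ℤ) : ℝ → ℝ → ℝ :=
  fun x z =>
    ∑ᶠ i : ℤ,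
      ((i : ℝ) * u i x z * cdX (v (k + 1 - i)) x z
        - (i : ℝ) * u i x z * cdZ (v (k - i)) x z
        + u i x z * cdZ (v (k - i)) x z
        - ((i : ℝ) * v i x z * cdX (u (k + 1 - i)) x z
            - (i : ℝ) * v i x z * cdZ (u (k - i)) x z
            + v i x z * cdZ (u (k - i)) x z))

/-!
Both statements are a degree count. The `p^k` coefficient of `{f, g}_C` pairs
the coefficient of `p^i` in one series with those of `p^(k-i)` and, with the
weight `i`, of `p^(k+1-i)` in the other. If both series live in degrees `≥ 0` and
`k < 0`, then `k - i < 0`, and `k + 1 - i < 0` unless the weight `i` is `0`; if both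
live in degrees `< 0` and `k ≥ 0`, then `k - i` and `k + 1 - i` are positive.
-/

@[simp]
lemma cdX_zero : cdX (0 : ℝ → ℝ → ℝ) = 0 := by
  funext x z; simp [cdX]

@[simp]
lemma cdZ_zero : cdZ (0 : ℝ → ℝ → ℝ) = 0 := by
  funext x z; simp [cdZ]

lemma cbCoeff_eq_zero_of_eq_zero_off {u v : ℤ → ℝ → ℝ → ℝ} {k : ℤ} (S : Set ℤ)
    (hu : ∀ i ∉ S, u i = 0) (hv : ∀ i ∉ S, v i = 0)
    (hS : ∀ i ∈ S, k - i ∉ S ∧ (i = 0 ∨ k + 1 - i ∉ S)) :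
    cbCoeff u v k = 0 := by
  funext x z
  refine finsum_eq_zero_of_forall_eq_zero fun i => ?_
  by_cases hi : i ∈ S
  · obtain ⟨hki, hk1i⟩ := hS i hi
    rw [hu _ hki, hv _ hki, cdZ_zero]
    rcases hk1i with rfl | hk1i
    · simp
    · rw [hu _ hk1i, hv _ hk1i, cdX_zero]
      simp
  · rw [hu i hi, hv i hi]
    simp

lemma cbCoeff_eq_zero_of_nonneg_support {u v : ℤ → ℝ → ℝ → ℝ}
    (hu : ∀ i, i < 0 → u i = 0) (hv : ∀ i, i < 0 → v i = 0) {k : ℤ} (hk : k < 0) :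
    cbCoeff u v k = 0 :=
  cbCoeff_eq_zero_of_eq_zero_off {i | 0 ≤ i}
    (fun i hi => hu i (not_le.mp hi)) (fun i hi => hv i (not_le.mp hi))
    (fun i (hi : 0 ≤ i) => ⟨by simp only [Set.mem_ofPred_eq]; omega, by simp only [Set.mem_ofPred_eq]; omega⟩)

lemma cbCoeff_eq_zero_of_neg_support {u v : ℤ → ℝ → ℝ → ℝ}
    (hu : ∀ i, 0 ≤ i → u i = 0) (hv : ∀ i, 0 ≤ i → v i = 0) {k : ℤ} (hk : 0 ≤ k) :
    cbCoeff u v k = 0 :=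
  cbCoeff_eq_zero_of_eq_zero_off {i | i < 0}
    (fun i hi => hu i (not_lt.mp hi)) (fun i hi => hv i (not_lt.mp hi))
    (fun i (hi : i < 0) => ⟨by simp only [Set.mem_ofPred_eq]; omega, by simp only [Set.mem_ofPred_eq]; omega⟩)

/-- The subspaces of formal Laurent series in `p` with only nonnegative powers,
resp. only strictly negative powers, are closed under the contact bracket. -/
theorem stmt10 :
    (∀ u v : ℤ → ℝ → ℝ → ℝ, {i | u i ≠ 0}.Finite → {i | v i ≠ 0}.Finite →
      (∀ i, i < 0 → u i = 0) → (∀ i, i < 0 → v i = 0) →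
      ∀ k, k < 0 → cbCoeff u v k = 0) ∧
    (∀ u v : ℤ → ℝ → ℝ → ℝ, {i | u i ≠ 0}.Finite → {i | v i ≠ 0}.Finite →
      (∀ i, 0 ≤ i → u i = 0) → (∀ i, 0 ≤ i → v i = 0) →
      ∀ k, 0 ≤ k → cbCoeff u v k = 0) :=
  ⟨fun _ _ _ _ hu hv _ hk => cbCoeff_eq_zero_of_nonneg_support hu hv hk,
    fun _ _ _ _ hu hv _ hk => cbCoeff_eq_zero_of_neg_support hu hv hk⟩
end

section
/- The subspace of formal Laurent series in p containing only powers p^j with j ≥ 1, and the complementary subspace of powers p^j with j ≤ 0, are both Lie subalgebras with respect to the contact bracket. -/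
theorem cbCoeff_eq_zero_of_support (S : Set ℤ) {u v : ℤ → ℝ → ℝ → ℝ}
    (hu : ∀ i ∉ S, u i = 0) (hv : ∀ i ∉ S, v i = 0) {k : ℤ}
    (hk : ∀ i ∈ S, k + 1 - i ∉ S ∧ k - i ∉ S) : cbCoeff u v k = 0 := by
  funext x z
  refine finsum_eq_zero_of_forall_eq_zero fun i => ?_
  by_cases hi : i ∈ S
  · obtain ⟨h₁, h₀⟩ := hk i hi
    simp [hu _ h₁, hu _ h₀, hv _ h₁, hv _ h₀]
  · simp [hu i hi, hv i hi]

/-- The subspace of formal Laurent series with only powers `p^j`, `j ≥ 1`, and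
the complementary subspace with powers `p^j`, `j ≤ 0`, are both closed under
the contact bracket. -/
theorem stmt11 :
    (∀ u v : ℤ → ℝ → ℝ → ℝ, {i | u i ≠ 0}.Finite → {i | v i ≠ 0}.Finite →
      (∀ i, i < 1 → u i = 0) → (∀ i, i < 1 → v i = 0) →
      ∀ k, k < 1 → cbCoeff u v k = 0) ∧
    (∀ u v : ℤ → ℝ → ℝ → ℝ, {i | u i ≠ 0}.Finite → {i | v i ≠ 0}.Finite →
      (∀ i, 0 < i → u i = 0) → (∀ i, 0 < i → v i = 0) →
      ∀ k, 0 < k → cbCoeff u v k = 0) := by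
  constructor
  · intro u v _ _ hu hv k hk
    refine cbCoeff_eq_zero_of_support {i | 1 ≤ i} (fun i hi => hu i ?_) (fun i hi => hv i ?_) ?_
    all_goals simp only [Set.mem_ofPred_eq] at *; omega
  · intro u v _ _ hu hv k hk
    refine cbCoeff_eq_zero_of_support {i | i ≤ 0} (fun i hi => hu i ?_) (fun i hi => hv i ?_) ?_
    all_goals simp only [Set.mem_ofPred_eq] at *; omega
end

section
/- For the Benney-type system (u_r)_{t₂} = 2(u_{r−1})_x − 2(r+1)u_{r+1}(u_{−1})_x, r < 0 (indices over negative integers, u_r smooth functions of x and t₂), this system is the reduction of the (3+1)-dimensional system (5.7) obtained by setting v₁ = 0, v₀ = 2u_{−1} and assuming all fields independent of y and z: under these substitutions the right-hand sides of (5.7) reduce exactly to the stated Benney right-hand sides, and the constraint equations (v₁)_y = (v₁)_x + (u_{−1})_z, (v₀)_y = (v₀)_x + (u_{−2})_z − 2(u_{−1})_x + 2u_{−1}(v₁)_z become identities. -/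
/-- Partial derivatives of a field depending on `(x, y, z, t)`. -/
noncomputable def fdX (w : ℝ → ℝ → ℝ → ℝ → ℝ) : ℝ → ℝ → ℝ → ℝ → ℝ :=
  fun x y z t => deriv (fun q => w q y z t) x

noncomputable def fdY (w : ℝ → ℝ → ℝ → ℝ → ℝ) : ℝ → ℝ → ℝ → ℝ → ℝ :=
  fun x y z t => deriv (fun q => w x q z t) y

noncomputable def fdZ (w : ℝ → ℝ → ℝ → ℝ → ℝ) : ℝ → ℝ → ℝ → ℝ → ℝ :=
  fun x y z t => deriv (fun q => w x y q t) z

/-- The Benney-type system `(u_r)_{t₂} = 2(u_{r−1})_x − 2(r+1)u_{r+1}(u_{−1})_x`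
(`r < 0`) is the reduction of the (3+1)-dimensional system (5.7) obtained by
setting `v₁ = 0`, `v₀ = 2u_{−1}` and assuming all fields independent of `y` and
`z`: the right-hand sides of (5.7) reduce exactly to the Benney right-hand
sides, and the two constraint equations of (5.7) become identities. -/
theorem stmt18 (u : ℤ → ℝ → ℝ → ℝ → ℝ → ℝ) (v₀ v₁ : ℝ → ℝ → ℝ → ℝ → ℝ)
    (hdiff : ∀ r, ContDiff ℝ (⊤ : ℕ∞)
      (fun q : ℝ × ℝ × ℝ × ℝ => u r q.1 q.2.1 q.2.2.1 q.2.2.2))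
    (hind : ∀ r x y y' z z' t, u r x y z t = u r x y' z' t)
    (hv₁ : v₁ = fun _ _ _ _ => 0)
    (hv₀ : ∀ x y z t, v₀ x y z t = 2 * u (-1) x y z t) :
    (∀ r : ℤ, r < 0 → ∀ x y z t,
      2 * fdX (u (r - 1)) x y z t - fdZ (u (r - 2)) x y z t
        - ((r : ℝ) + 1) * u (r + 1) x y z t * fdX v₀ x y z t
        + v₀ x y z t * fdZ (u r) x y z t
        + ((r : ℝ) - 1) * u r x y z t * fdZ v₀ x y z t
        + v₁ x y z t * fdX (u r) x y z t
        - (r : ℝ) * u r x y z t * fdX v₁ x y z t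
        + ((r : ℝ) - 2) * u (r - 1) x y z t * fdZ v₁ x y z t
      = 2 * fdX (u (r - 1)) x y z t
        - 2 * ((r : ℝ) + 1) * u (r + 1) x y z t * fdX (u (-1)) x y z t) ∧
    (∀ x y z t, fdY v₁ x y z t = fdX v₁ x y z t + fdZ (u (-1)) x y z t) ∧
    (∀ x y z t, fdY v₀ x y z t =
      fdX v₀ x y z t + fdZ (u (-2)) x y z t - 2 * fdX (u (-1)) x y z t
        + 2 * u (-1) x y z t * fdZ v₁ x y z t) := by
  have hZ : ∀ r x y z t, fdZ (u r) x y z t = 0 := by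
    intro r x y z t
    have : (fun q => u r x y q t) = fun _ => u r x y 0 t := by
      funext q; exact hind r x y y q 0 t
    simp [fdZ, this]
  have hY : ∀ r x y z t, fdY (u r) x y z t = 0 := by
    intro r x y z t
    have : (fun q => u r x q z t) = fun _ => u r x y z t := by
      funext q; exact hind r x q y z z t
    simp [fdY, this]
  have hv0X : ∀ x y z t, fdX v₀ x y z t = 2 * fdX (u (-1)) x y z t := by
    intro x y z t
    have : (fun q => v₀ q y z t) = fun q => 2 * u (-1) q y z t := by
      funext q; exact hv₀ q y z t
    simp [fdX, this, deriv_const_mul_field]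
  have hv0Z : ∀ x y z t, fdZ v₀ x y z t = 0 := by
    intro x y z t
    have : (fun q => v₀ x y q t) = fun q => 2 * u (-1) x y q t := by
      funext q; exact hv₀ x y q t
    have h2 := hZ (-1) x y z t
    simp only [fdZ, this, deriv_const_mul_field] at *
    rw [h2]; ring
  have hv0Y : ∀ x y z t, fdY v₀ x y z t = 0 := by
    intro x y z t
    have : (fun q => v₀ x q z t) = fun q => 2 * u (-1) x q z t := by
      funext q; exact hv₀ x q z t
    have h2 := hY (-1) x y z t
    simp only [fdY, this, deriv_const_mul_field] at *
    rw [h2]; ring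
  subst hv₁
  have z0X : fdX (fun _ _ _ _ => (0:ℝ)) = fun _ _ _ _ => 0 := by
    funext a b c d; simp [fdX]
  have z0Y : fdY (fun _ _ _ _ => (0:ℝ)) = fun _ _ _ _ => 0 := by
    funext a b c d; simp [fdY]
  have z0Z : fdZ (fun _ _ _ _ => (0:ℝ)) = fun _ _ _ _ => 0 := by
    funext a b c d; simp [fdZ]
  refine ⟨?_, ?_, ?_⟩
  · intro r hr x y z t
    simp only [z0X, z0Z, hZ, hv0X, hv0Z]
    ring
  · intro x y z t
    simp only [z0X, z0Y, hZ]; ring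
  · intro x y z t
    simp only [z0Z, hZ, hv0X, hv0Y]
    ring
end

section
/- For L = p + u₀ + u₋₁p^{−1} and B₂ = v₂p² + v₁p, the coefficient of each power of p in the expression {B₂, L}_C + (B₂)_y − L_{t₂} vanishes if and only if the four equations of system (ut2) hold: (u₋₁)_{t₂} = u₋₁(v₁)_x + v₁(u₋₁)_x; (u₀)_{t₂} = −2u₋₁(v₁)_z + v₁(u₀)_x + u₋₁(v₂)_x + 2v₂(u₋₁)_x; (v₁)_y = (v₁)_x + 2u₋₁(v₂)_z + v₂(u₋₁)_z + u₀(v₁)_z − 2v₂(u₀)_x; (v₂)_y = (v₂)_x + u₀(v₂)_z + v₂(u₀)_z. -/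
noncomputable def fdT (w : ℝ → ℝ → ℝ → ℝ → ℝ) : ℝ → ℝ → ℝ → ℝ → ℝ :=
  fun x y z t => deriv (fun q => w x y z q) t

/-- Coefficient at `p^k` of the contact bracket `{f, g}_C` of Laurent series
`f = Σᵢ a i pⁱ`, `g = Σⱼ b j pʲ` with coefficient fields depending on
`(x, y, z, t)`. -/
noncomputable def cbCoeff4 (a b : ℤ → ℝ → ℝ → ℝ → ℝ → ℝ) (k : ℤ) :
    ℝ → ℝ → ℝ → ℝ → ℝ :=
  fun x y z t =>
    ∑ᶠ i : ℤ,
      ((i : ℝ) * a i x y z t * fdX (b (k + 1 - i)) x y z t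
        - (i : ℝ) * a i x y z t * fdZ (b (k - i)) x y z t
        + a i x y z t * fdZ (b (k - i)) x y z t
        - ((i : ℝ) * b i x y z t * fdX (a (k + 1 - i)) x y z t
            - (i : ℝ) * b i x y z t * fdZ (a (k - i)) x y z t
            + b i x y z t * fdZ (a (k - i)) x y z t))

/-- Coefficients of `L = p + u₀ + u₋₁ p⁻¹`. -/
noncomputable def Lcoeff (u₀ um1 : ℝ → ℝ → ℝ → ℝ → ℝ) : ℤ → ℝ → ℝ → ℝ → ℝ → ℝ :=
  fun k => if k = 1 then (fun _ _ _ _ => 1) else if k = 0 then u₀ else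
    if k = -1 then um1 else 0

/-- Coefficients of `B₂ = v₂ p² + v₁ p`. -/
noncomputable def Bcoeff (v₁ v₂ : ℝ → ℝ → ℝ → ℝ → ℝ) : ℤ → ℝ → ℝ → ℝ → ℝ → ℝ :=
  fun k => if k = 2 then v₂ else if k = 1 then v₁ else 0

lemma fdX_zero : fdX (0 : ℝ → ℝ → ℝ → ℝ → ℝ) = 0 := by funext x y z t; simp [fdX]
lemma fdY_zero : fdY (0 : ℝ → ℝ → ℝ → ℝ → ℝ) = 0 := by funext x y z t; simp [fdY]
lemma fdZ_zero : fdZ (0 : ℝ → ℝ → ℝ → ℝ → ℝ) = 0 := by funext x y z t; simp [fdZ]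
lemma fdT_zero : fdT (0 : ℝ → ℝ → ℝ → ℝ → ℝ) = 0 := by funext x y z t; simp [fdT]
lemma fdX_one : fdX (fun _ _ _ _ => (1:ℝ)) = 0 := by funext x y z t; simp [fdX]
lemma fdY_one : fdY (fun _ _ _ _ => (1:ℝ)) = 0 := by funext x y z t; simp [fdY]
lemma fdZ_one : fdZ (fun _ _ _ _ => (1:ℝ)) = 0 := by funext x y z t; simp [fdZ]
lemma fdT_one : fdT (fun _ _ _ _ => (1:ℝ)) = 0 := by funext x y z t; simp [fdT]

lemma cb_expand (a b : ℤ → ℝ → ℝ → ℝ → ℝ → ℝ)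
    (ha : ∀ i : ℤ, i ≠ 1 → i ≠ 2 → a i = 0)
    (hb : ∀ i : ℤ, i ≠ -1 → i ≠ 0 → i ≠ 1 → b i = 0)
    (k : ℤ) (x y z t : ℝ) :
    cbCoeff4 a b k x y z t =
      ∑ i ∈ ({-1, 0, 1, 2} : Finset ℤ),
        ((i : ℝ) * a i x y z t * fdX (b (k + 1 - i)) x y z t
          - (i : ℝ) * a i x y z t * fdZ (b (k - i)) x y z t
          + a i x y z t * fdZ (b (k - i)) x y z t
          - ((i : ℝ) * b i x y z t * fdX (a (k + 1 - i)) x y z t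
              - (i : ℝ) * b i x y z t * fdZ (a (k - i)) x y z t
              + b i x y z t * fdZ (a (k - i)) x y z t)) := by
  apply finsum_eq_finset_sum_of_support_subset
  intro i hi
  simp only [Finset.coe_insert, Finset.coe_singleton, Set.mem_insert_iff,
    Set.mem_singleton_iff]
  by_contra h
  push_neg at h
  obtain ⟨h1, h2, h3, h4⟩ := h
  apply hi
  simp [ha i h3 h4, hb i h1 h2 h3]

/-- For `L = p + u₀ + u₋₁p⁻¹` and `B₂ = v₂p² + v₁p`, the coefficient of each
power of `p` in `{B₂, L}_C + (B₂)_y − L_{t₂}` vanishes if and only if the four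
equations of system (ut2) hold. -/
theorem stmt19 (u₀ um1 v₁ v₂ : ℝ → ℝ → ℝ → ℝ → ℝ)
    (hu₀ : ContDiff ℝ (⊤ : ℕ∞) (fun q : ℝ × ℝ × ℝ × ℝ => u₀ q.1 q.2.1 q.2.2.1 q.2.2.2))
    (hum1 : ContDiff ℝ (⊤ : ℕ∞) (fun q : ℝ × ℝ × ℝ × ℝ => um1 q.1 q.2.1 q.2.2.1 q.2.2.2))
    (hv₁ : ContDiff ℝ (⊤ : ℕ∞) (fun q : ℝ × ℝ × ℝ × ℝ => v₁ q.1 q.2.1 q.2.2.1 q.2.2.2))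
    (hv₂ : ContDiff ℝ (⊤ : ℕ∞) (fun q : ℝ × ℝ × ℝ × ℝ => v₂ q.1 q.2.1 q.2.2.1 q.2.2.2)) :
    (∀ k : ℤ, ∀ x y z t,
        cbCoeff4 (Bcoeff v₁ v₂) (Lcoeff u₀ um1) k x y z t
          + fdY (Bcoeff v₁ v₂ k) x y z t - fdT (Lcoeff u₀ um1 k) x y z t = 0) ↔
      ((∀ x y z t, fdT um1 x y z t =
          um1 x y z t * fdX v₁ x y z t + v₁ x y z t * fdX um1 x y z t) ∧
       (∀ x y z t, fdT u₀ x y z t =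
          -2 * um1 x y z t * fdZ v₁ x y z t + v₁ x y z t * fdX u₀ x y z t
            + um1 x y z t * fdX v₂ x y z t + 2 * v₂ x y z t * fdX um1 x y z t) ∧
       (∀ x y z t, fdY v₁ x y z t =
          fdX v₁ x y z t + 2 * um1 x y z t * fdZ v₂ x y z t
            + v₂ x y z t * fdZ um1 x y z t + u₀ x y z t * fdZ v₁ x y z t
            - 2 * v₂ x y z t * fdX u₀ x y z t) ∧
       (∀ x y z t, fdY v₂ x y z t =
          fdX v₂ x y z t + u₀ x y z t * fdZ v₂ x y z t
            + v₂ x y z t * fdZ u₀ x y z t)) := by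
  have ha : ∀ i : ℤ, i ≠ 1 → i ≠ 2 → Bcoeff v₁ v₂ i = 0 := by
    intro i h1 h2; simp [Bcoeff, h1, h2]
  have hb : ∀ i : ℤ, i ≠ -1 → i ≠ 0 → i ≠ 1 → Lcoeff u₀ um1 i = 0 := by
    intro i h1 h2 h3; simp [Lcoeff, h1, h2, h3]
  have key := cb_expand (Bcoeff v₁ v₂) (Lcoeff u₀ um1) ha hb
  have Km1 : ∀ x y z t : ℝ,
      cbCoeff4 (Bcoeff v₁ v₂) (Lcoeff u₀ um1) (-1) x y z t
        + fdY (Bcoeff v₁ v₂ (-1)) x y z t - fdT (Lcoeff u₀ um1 (-1)) x y z t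
      = um1 x y z t * fdX v₁ x y z t + v₁ x y z t * fdX um1 x y z t
          - fdT um1 x y z t := by
    intro x y z t
    rw [key]
    norm_num [Finset.sum_insert, Finset.mem_insert, Finset.mem_singleton,
      Lcoeff, Bcoeff, fdX_zero, fdY_zero, fdZ_zero, fdT_zero,
      fdX_one, fdY_one, fdZ_one, fdT_one]
    ring
  have K0 : ∀ x y z t : ℝ,
      cbCoeff4 (Bcoeff v₁ v₂) (Lcoeff u₀ um1) 0 x y z t
        + fdY (Bcoeff v₁ v₂ 0) x y z t - fdT (Lcoeff u₀ um1 0) x y z t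
      = -2 * um1 x y z t * fdZ v₁ x y z t + v₁ x y z t * fdX u₀ x y z t
          + um1 x y z t * fdX v₂ x y z t + 2 * v₂ x y z t * fdX um1 x y z t
          - fdT u₀ x y z t := by
    intro x y z t
    rw [key]
    norm_num [Finset.sum_insert, Finset.mem_insert, Finset.mem_singleton,
      Lcoeff, Bcoeff, fdX_zero, fdY_zero, fdZ_zero, fdT_zero,
      fdX_one, fdY_one, fdZ_one, fdT_one]
    ring
  have K1 : ∀ x y z t : ℝ,
      cbCoeff4 (Bcoeff v₁ v₂) (Lcoeff u₀ um1) 1 x y z t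
        + fdY (Bcoeff v₁ v₂ 1) x y z t - fdT (Lcoeff u₀ um1 1) x y z t
      = fdY v₁ x y z t - (fdX v₁ x y z t + 2 * um1 x y z t * fdZ v₂ x y z t
          + v₂ x y z t * fdZ um1 x y z t + u₀ x y z t * fdZ v₁ x y z t
          - 2 * v₂ x y z t * fdX u₀ x y z t) := by
    intro x y z t
    rw [key]
    norm_num [Finset.sum_insert, Finset.mem_insert, Finset.mem_singleton,
      Lcoeff, Bcoeff, fdX_zero, fdY_zero, fdZ_zero, fdT_zero,
      fdX_one, fdY_one, fdZ_one, fdT_one]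
    ring
  have K2 : ∀ x y z t : ℝ,
      cbCoeff4 (Bcoeff v₁ v₂) (Lcoeff u₀ um1) 2 x y z t
        + fdY (Bcoeff v₁ v₂ 2) x y z t - fdT (Lcoeff u₀ um1 2) x y z t
      = fdY v₂ x y z t - (fdX v₂ x y z t + u₀ x y z t * fdZ v₂ x y z t
          + v₂ x y z t * fdZ u₀ x y z t) := by
    intro x y z t
    rw [key]
    norm_num [Finset.sum_insert, Finset.mem_insert, Finset.mem_singleton,
      Lcoeff, Bcoeff, fdX_zero, fdY_zero, fdZ_zero, fdT_zero,
      fdX_one, fdY_one, fdZ_one, fdT_one]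
    ring
  have hLdX : ∀ m : ℤ, m ≠ 0 → m ≠ -1 → fdX (Lcoeff u₀ um1 m) = 0 := by
    intro m h0 hm1
    by_cases h : m = 1
    · subst h; simp [Lcoeff, fdX_one]
    · rw [hb m hm1 h0 h, fdX_zero]
  have hLdZ : ∀ m : ℤ, m ≠ 0 → m ≠ -1 → fdZ (Lcoeff u₀ um1 m) = 0 := by
    intro m h0 hm1
    by_cases h : m = 1
    · subst h; simp [Lcoeff, fdZ_one]
    · rw [hb m hm1 h0 h, fdZ_zero]
  have hBdX : ∀ m : ℤ, m ≠ 1 → m ≠ 2 → fdX (Bcoeff v₁ v₂ m) = 0 := by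
    intro m h1 h2; rw [ha m h1 h2, fdX_zero]
  have hBdZ : ∀ m : ℤ, m ≠ 1 → m ≠ 2 → fdZ (Bcoeff v₁ v₂ m) = 0 := by
    intro m h1 h2; rw [ha m h1 h2, fdZ_zero]
  have Kgen : ∀ k : ℤ, k ≠ -1 → k ≠ 0 → k ≠ 1 → k ≠ 2 → ∀ x y z t : ℝ,
      cbCoeff4 (Bcoeff v₁ v₂) (Lcoeff u₀ um1) k x y z t
        + fdY (Bcoeff v₁ v₂ k) x y z t - fdT (Lcoeff u₀ um1 k) x y z t = 0 := by
    intro k hk1 hk2 hk3 hk4 x y z t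
    have hcb : cbCoeff4 (Bcoeff v₁ v₂) (Lcoeff u₀ um1) k x y z t = 0 := by
      rw [cbCoeff4]
      apply finsum_eq_zero_of_forall_eq_zero
      intro i
      by_cases h2 : i = 2
      · subst h2
        rw [hLdX (k + 1 - 2) (by omega) (by omega),
          hLdZ (k - 2) (by omega) (by omega),
          hb 2 (by omega) (by omega) (by omega)]
        simp
      by_cases h1 : i = 1
      · subst h1
        rw [hLdX (k + 1 - 1) (by omega) (by omega),
          hLdZ (k - 1) (by omega) (by omega),
          hBdX (k + 1 - 1) (by omega) (by omega)]
        push_cast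
        simp only [Pi.zero_apply]
        ring
      by_cases h0 : i = 0
      · subst h0
        rw [hBdZ (k - 0) (by omega) (by omega),
          ha 0 (by omega) (by omega)]
        simp
      by_cases hm : i = -1
      · subst hm
        rw [hBdX (k + 1 - -1) (by omega) (by omega),
          hBdZ (k - -1) (by omega) (by omega),
          ha (-1) (by omega) (by omega)]
        simp
      · rw [ha i h1 h2, hb i hm h0 h1]
        simp
    rw [hcb, ha k hk3 hk4, hb k hk1 hk2 hk3, fdY_zero, fdT_zero]
    simp
  constructor
  · intro h
    refine ⟨fun x y z t => ?_, fun x y z t => ?_, fun x y z t => ?_,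
      fun x y z t => ?_⟩
    · have := h (-1) x y z t; rw [Km1] at this; linarith
    · have := h 0 x y z t; rw [K0] at this; linarith
    · have := h 1 x y z t; rw [K1] at this; linarith
    · have := h 2 x y z t; rw [K2] at this; linarith
  · rintro ⟨e1, e2, e3, e4⟩ k x y z t
    by_cases hk1 : k = -1
    · subst hk1; rw [Km1]; have := e1 x y z t; linarith
    by_cases hk2 : k = 0
    · subst hk2; rw [K0]; have := e2 x y z t; linarith
    by_cases hk3 : k = 1
    · subst hk3; rw [K1]; have := e3 x y z t; linarith
    by_cases hk4 : k = 2
    · subst hk4; rw [K2]; have := e4 x y z t; linarith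
    · exact Kgen k hk1 hk2 hk3 hk4 x y z t
end
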